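/- arXiv:math/0006129 — 2 statements merged into one kernel-verified Lean document; each statement's English description precedes it below -/
import Mathlib

section
/- For every choice of signs θ_{i,j} = ±1 (1 ≤ i,j ≤ n), the function x(s,t) = Σ_{i,j=1}^n θ_{i,j} r_i(s) r_j(t) satisfies ‖x‖_{L^∞([0,1]²)} ≥ (1/√2)·n^{3/2}. -/
open MeasureTheory Real Set

/-- Rademacher function `r_k(t) = sign (sin (2^(k-1) π t))`. -/
noncomputable def rad (k : ℕ) (t : ℝ) : ℝ :=
  Real.sign (Real.sin (2 ^ (k - 1) * Real.pi * t))

/-- Lebesgue measure on the unit square `[0,1]²`. -/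
noncomputable def μsq : Measure (ℝ × ℝ) :=
  (volume.restrict (Set.Icc (0:ℝ) 1)).prod (volume.restrict (Set.Icc (0:ℝ) 1))

/-!
On a dyadic square `I_v × I_w` of side `2⁻ⁿ` every `r_i` with `i ≤ n` is constant, and the
binary digits of `v` can be chosen to make `(r_i)_{2 ≤ i ≤ n}` any sign vector (`r_1 ≡ 1`).
Since negating a whole sign vector only negates the double sum, the essential supremum is at
least `max_{a, b} |∑ θ_ij a_i b_j|` over all `a, b ∈ {±1}ⁿ`. For fixed `a` the best `b` gives
`∑_j |∑_i θ_ij a_i|`, and averaging over `a` column by column, Khinchin's inequality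
`𝔼 |∑ ε_i c_i| ≥ √(n/2)` for `|c_i| = 1` yields `n √(n/2)`.

For unit coefficients Khinchin's inequality is a binomial computation: absorbing the signs of
the `c_i` leaves `𝔼 |n - 2 Bin(n, 1/2)| ≥ 2n C(n-1, ⌊(n-1)/2⌋) / 2ⁿ`, and the central binomial
bound `16ʰ ≤ 4h C(2h, h)²` turns this into `√(n/2)`.
-/

open Finset

-- Telescoping: `(n + 1 - 2k) C(n+1, k) = (n + 1) (C(n, k) - C(n, k-1))`.
lemma sum_range_choose_mul_sub_two_mul (n h : ℕ) :
    ∑ k ∈ range (h + 1), ((n + 1).choose k : ℝ) * (n + 1 - 2 * k) = (n + 1) * n.choose h := by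
  induction h with
  | zero => simp
  | succ h ih =>
    have hstep : ((n + 1).choose (h + 1) : ℝ) * (n - h) = (n + 1) * n.choose (h + 1) := by
      rcases le_or_gt h n with hh | hh
      · have := Nat.choose_mul_succ_eq n (h + 1)
        rw [show n + 1 - (h + 1) = n - h by omega] at this
        rw [mul_comm _ (n.choose (h + 1) : ℝ), ← Nat.cast_sub hh]
        exact_mod_cast this.symm
      · simp [Nat.choose_eq_zero_of_lt (show n + 1 < h + 1 by omega),
          Nat.choose_eq_zero_of_lt (show n < h + 1 by omega)]
    have hsucc : ((n + 1 : ℕ) : ℝ) * n.choose h = (n + 1).choose (h + 1) * (h + 1) := by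
      exact_mod_cast Nat.add_one_mul_choose_eq n h
    push_cast at hsucc
    rw [sum_range_succ, ih, hsucc, ← hstep]
    push_cast
    ring

-- `|x| = x⁺ + (-x)⁺`, the reflection `k ↦ n + 1 - k` exchanges the two halves, and only the
-- positive parts with `k ≤ h` are kept.
lemma two_mul_mul_choose_le_sum_choose_mul_abs {n h : ℕ} (hh : h ≤ n) :
    2 * ((n + 1) * n.choose h)
      ≤ ∑ k ∈ range (n + 2), ((n + 1).choose k : ℝ) * |(n + 1 : ℝ) - 2 * k| := by
  set f : ℕ → ℝ := fun k => (n + 1).choose k * max ((n + 1 : ℝ) - 2 * k) 0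
  have hreflect : ∑ k ∈ range (n + 2), f k
      = ∑ k ∈ range (n + 2), ((n + 1).choose k : ℝ) * max (-((n + 1 : ℝ) - 2 * k)) 0 := by
    rw [← sum_range_reflect]
    refine sum_congr rfl fun k hk => ?_
    have hk : k ≤ n + 1 := by have := mem_range.1 hk; omega
    simp only [f, show n + 2 - 1 - k = n + 1 - k by omega, Nat.choose_symm hk]
    rw [Nat.cast_sub hk]
    push_cast
    ring_nf
  have hhalf : 2 * ((n + 1) * n.choose h) ≤ 2 * ∑ k ∈ range (n + 2), f k := by
    rw [← sum_range_choose_mul_sub_two_mul]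
    gcongr
    calc ∑ k ∈ range (h + 1), ((n + 1).choose k : ℝ) * (n + 1 - 2 * k)
        ≤ ∑ k ∈ range (h + 1), f k := sum_le_sum fun k _ =>
          mul_le_mul_of_nonneg_left (le_max_left _ _) (by positivity)
      _ ≤ ∑ k ∈ range (n + 2), f k :=
          sum_le_sum_of_subset_of_nonneg (range_subset_range.2 (by omega))
            fun k _ _ => by positivity
  calc 2 * ((n + 1) * n.choose h) ≤ 2 * ∑ k ∈ range (n + 2), f k := hhalf
    _ = ∑ k ∈ range (n + 2), ((n + 1).choose k : ℝ) * |(n + 1 : ℝ) - 2 * k| := by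
      rw [two_mul]
      nth_rw 2 [hreflect]
      rw [← sum_add_distrib]
      refine sum_congr rfl fun k _ => ?_
      rw [← mul_add, max_zero_add_max_neg_zero_eq_abs_self]

lemma sixteen_pow_le_mul_centralBinom_sq {h : ℕ} (hh : h ≠ 0) :
    16 ^ h ≤ 4 * h * h.centralBinom ^ 2 := by
  induction h, Nat.one_le_iff_ne_zero.2 hh using Nat.le_induction with
  | base => decide
  | succ h h₁ ih =>
    have hrec := Nat.succ_mul_centralBinom_succ h
    refine Nat.le_of_mul_le_mul_left ?_ (Nat.succ_pos h)
    calc (h + 1) * 16 ^ (h + 1) = 16 * ((h + 1) * 16 ^ h) := by ring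
      _ ≤ 16 * ((h + 1) * (4 * h * h.centralBinom ^ 2)) := by gcongr; exact ih (by omega)
      _ = 64 * (h * (h + 1)) * h.centralBinom ^ 2 := by ring
      _ ≤ 16 * (2 * h + 1) ^ 2 * h.centralBinom ^ 2 := Nat.mul_le_mul_right _ (by nlinarith)
      _ = 4 * (2 * (2 * h + 1) * h.centralBinom) ^ 2 := by ring
      _ = (h + 1) * (4 * (h + 1) * (h + 1).centralBinom ^ 2) := by rw [← hrec]; ring

lemma four_pow_le_mul_choose_half_sq (m : ℕ) : 4 ^ m ≤ 2 * (m + 1) * m.choose (m / 2) ^ 2 := by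
  obtain ⟨h, rfl | rfl⟩ := Nat.even_or_odd' m
  · rw [Nat.mul_div_cancel_left h two_pos, ← Nat.centralBinom_eq_two_mul_choose, pow_mul]
    rcases Nat.eq_zero_or_pos h with rfl | hpos
    · decide
    · calc (4 ^ 2) ^ h ≤ 4 * h * h.centralBinom ^ 2 := sixteen_pow_le_mul_centralBinom_sq hpos.ne'
        _ ≤ 2 * (2 * h + 1) * h.centralBinom ^ 2 := Nat.mul_le_mul_right _ (by omega)
  · have hcb : (h + 1).centralBinom = 2 * (2 * h + 1).choose h := by
      rw [Nat.centralBinom_eq_two_mul_choose, show 2 * (h + 1) = 2 * h + 1 + 1 by ring,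
        Nat.choose_succ_succ, Nat.choose_symm_half]
      ring
    rw [show (2 * h + 1) / 2 = h by omega]
    refine Nat.le_of_mul_le_mul_left ?_ (show 0 < 4 by norm_num)
    calc 4 * 4 ^ (2 * h + 1) = 16 ^ (h + 1) := by
          rw [← pow_succ', show 2 * h + 1 + 1 = 2 * (h + 1) by ring, pow_mul]; norm_num
      _ ≤ 4 * (h + 1) * (h + 1).centralBinom ^ 2 :=
          sixteen_pow_le_mul_centralBinom_sq h.succ_ne_zero
      _ = 4 * (2 * (2 * h + 1 + 1) * (2 * h + 1).choose h ^ 2) := by rw [hcb]; ring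

lemma two_pow_mul_sqrt_le_sum_choose_mul_abs (n : ℕ) :
    2 ^ n * √(n / 2) ≤ ∑ k ∈ range (n + 1), (n.choose k : ℝ) * |(n : ℝ) - 2 * k| := by
  rcases n with _ | m
  · simp
  push_cast
  refine le_trans ?_ (two_mul_mul_choose_le_sum_choose_mul_abs (Nat.div_le_self m 2))
  have hbound : (4 : ℝ) ^ m ≤ 2 * (m + 1) * (m.choose (m / 2) : ℝ) ^ 2 := by
    exact_mod_cast four_pow_le_mul_choose_half_sq m
  have hpow : (4 : ℝ) ^ m = (2 ^ m) ^ 2 := by rw [← pow_mul, mul_comm, pow_mul]; norm_num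
  rw [show (2 : ℝ) ^ (m + 1) * √((m + 1) / 2) = √((2 ^ (m + 1)) ^ 2 * ((m + 1) / 2)) by
      rw [Real.sqrt_mul' _ (by positivity), Real.sqrt_sq (by positivity)], Real.sqrt_le_iff]
  refine ⟨by positivity, ?_⟩
  rw [hpow] at hbound
  calc ((2 : ℝ) ^ (m + 1)) ^ 2 * ((m + 1) / 2) = 2 * (m + 1) * (2 ^ m) ^ 2 := by ring
    _ ≤ 2 * (m + 1) * (2 * (m + 1) * (m.choose (m / 2) : ℝ) ^ 2) := by gcongr
    _ = (2 * ((m + 1) * m.choose (m / 2))) ^ 2 := by ring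

section Cube

variable {ι : Type*} [DecidableEq ι]

def cubeSign (A : Finset ι) (i : ι) : ℝ := if i ∈ A then -1 else 1

lemma cubeSign_symmDiff (A C : Finset ι) (i : ι) :
    cubeSign (symmDiff A C) i = cubeSign A i * cubeSign C i := by
  by_cases hA : i ∈ A <;> by_cases hC : i ∈ C <;> simp [cubeSign, Finset.mem_symmDiff, hA, hC]

lemma cubeSign_sdiff {s : Finset ι} (A : Finset ι) {i : ι} (hi : i ∈ s) :
    cubeSign (s \ A) i = -cubeSign A i := by
  by_cases hA : i ∈ A <;> simp [cubeSign, hA, hi]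

lemma cubeSign_image {κ : Type*} [DecidableEq κ] {e : ι → κ} {s A : Finset ι}
    (he : Set.InjOn e s) (hA : A ⊆ s) {i : ι} (hi : i ∈ s) :
    cubeSign (A.image e) (e i) = cubeSign A i := by
  have hmem : e i ∈ A.image e ↔ i ∈ A := ⟨fun h => by
    obtain ⟨j, hj, hji⟩ := mem_image.1 h
    rwa [← he (hA hj) hi hji], mem_image_of_mem e⟩
  simp only [cubeSign, hmem]

lemma sum_cubeSign {s A : Finset ι} (hA : A ⊆ s) :
    ∑ i ∈ s, cubeSign A i = #s - 2 * #A := by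
  have h : ∀ i, cubeSign A i = 1 - 2 * if i ∈ A then 1 else 0 := by
    intro i; unfold cubeSign; split_ifs <;> norm_num
  simp only [h, sum_sub_distrib, ← mul_sum, sum_boole, filter_mem_eq_inter,
    Finset.inter_eq_right.2 hA, sum_const, nsmul_eq_mul, mul_one]

lemma exists_subset_sum_mul_cubeSign_eq_sum_abs (s : Finset ι) (a : ι → ℝ) :
    ∃ B ⊆ s, ∑ j ∈ s, a j * cubeSign B j = ∑ j ∈ s, |a j| := by
  refine ⟨s.filter (a · < 0), filter_subset _ _, sum_congr rfl fun j hj => ?_⟩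
  by_cases ha : a j < 0
  · simp [cubeSign, hj, ha, abs_of_neg ha]
  · simp [cubeSign, ha, abs_of_nonneg (not_lt.1 ha)]

lemma sum_powerset_abs_sum_mul_cubeSign {s : Finset ι} {c : ι → ℝ}
    (hc : ∀ i ∈ s, |c i| = 1) :
    ∑ A ∈ s.powerset, |∑ i ∈ s, c i * cubeSign A i|
      = ∑ A ∈ s.powerset, |∑ i ∈ s, cubeSign A i| := by
  set C := s.filter (c · < 0)
  have hC : ∀ i ∈ s, c i = cubeSign C i := by
    intro i hi
    rcases (abs_eq zero_le_one).1 (hc i hi) with h | h <;> simp [C, cubeSign, hi, h]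
  have hmem : ∀ A ∈ s.powerset, symmDiff A C ∈ s.powerset := fun A hA =>
    Finset.mem_powerset.2 (symmDiff_le (le_sup_of_le_right (Finset.mem_powerset.1 hA))
      (le_sup_of_le_right (filter_subset _ _)))
  refine sum_nbij' (symmDiff · C) (symmDiff · C) hmem hmem
    (fun A _ => symmDiff_symmDiff_cancel_right C A)
    (fun A _ => symmDiff_symmDiff_cancel_right C A) fun A _ => ?_
  congr 1
  refine sum_congr rfl fun i hi => ?_
  rw [hC i hi, cubeSign_symmDiff, mul_comm]

theorem two_pow_card_mul_sqrt_le_sum_powerset_abs_sum_mul_cubeSign {s : Finset ι} {c : ι → ℝ}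
    (hc : ∀ i ∈ s, |c i| = 1) :
    2 ^ #s * √(#s / 2) ≤ ∑ A ∈ s.powerset, |∑ i ∈ s, c i * cubeSign A i| := by
  rw [sum_powerset_abs_sum_mul_cubeSign hc,
    sum_congr rfl fun A hA => by rw [sum_cubeSign (Finset.mem_powerset.1 hA)],
    sum_powerset_apply_card (fun k => |(#s : ℝ) - 2 * k|)]
  simpa only [nsmul_eq_mul] using two_pow_mul_sqrt_le_sum_choose_mul_abs #s

theorem exists_card_mul_sqrt_le_abs_sum_mul_cubeSign (s : Finset ι) {θ : ι → ι → ℝ}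
    (hθ : ∀ i ∈ s, ∀ j ∈ s, |θ i j| = 1) :
    ∃ A ⊆ s, ∃ B ⊆ s,
      #s * √(#s / 2) ≤ |∑ i ∈ s, ∑ j ∈ s, θ i j * cubeSign A i * cubeSign B j| := by
  set a : Finset ι → ι → ℝ := fun A j => ∑ i ∈ s, θ i j * cubeSign A i
  have havg : ∑ _A ∈ s.powerset, (#s * √(#s / 2) : ℝ) ≤ ∑ A ∈ s.powerset, ∑ j ∈ s, |a A j| :=
    calc ∑ _A ∈ s.powerset, (#s * √(#s / 2) : ℝ) = ∑ _j ∈ s, 2 ^ #s * √(#s / 2) := by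
          simp only [sum_const, card_powerset, nsmul_eq_mul]; push_cast; ring
      _ ≤ ∑ j ∈ s, ∑ A ∈ s.powerset, |a A j| := sum_le_sum fun j hj =>
          two_pow_card_mul_sqrt_le_sum_powerset_abs_sum_mul_cubeSign fun i hi => hθ i hi j hj
      _ = ∑ A ∈ s.powerset, ∑ j ∈ s, |a A j| := sum_comm
  obtain ⟨A, hA, hbound⟩ := exists_le_of_sum_le ⟨∅, empty_mem_powerset s⟩ havg
  obtain ⟨B, hB, hsigns⟩ := exists_subset_sum_mul_cubeSign_eq_sum_abs s (a A)
  refine ⟨A, Finset.mem_powerset.1 hA, B, hB, ?_⟩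
  have hrow : ∑ i ∈ s, ∑ j ∈ s, θ i j * cubeSign A i * cubeSign B j
      = ∑ j ∈ s, a A j * cubeSign B j := by
    rw [sum_comm]
    exact sum_congr rfl fun j _ => (sum_mul _ _ _).symm
  rw [hrow, hsigns, abs_of_nonneg (sum_nonneg fun j _ => abs_nonneg _)]
  exact hbound

lemma exists_subset_erase_cubeSign_eq_mul {s A : Finset ι} (hA : A ⊆ s) (i₀ : ι) :
    ∃ A' ⊆ s.erase i₀, ∃ σ : ℝ, |σ| = 1 ∧ ∀ i ∈ s, cubeSign A' i = σ * cubeSign A i := by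
  by_cases h : i₀ ∈ A
  · refine ⟨s \ A, fun i hi => ?_, -1, by norm_num, fun i hi => by rw [cubeSign_sdiff A hi]; ring⟩
    obtain ⟨his, hiA⟩ := Finset.mem_sdiff.1 hi
    exact mem_erase.2 ⟨fun hii => hiA (hii ▸ h), his⟩
  · exact ⟨A, fun i hi => mem_erase.2 ⟨fun hii => h (hii ▸ hi), hA hi⟩, 1, by norm_num,
      fun i _ => (one_mul _).symm⟩

theorem exists_subset_erase_card_mul_sqrt_le_abs_sum_mul_cubeSign (s : Finset ι) (i₀ : ι)
    {θ : ι → ι → ℝ} (hθ : ∀ i ∈ s, ∀ j ∈ s, |θ i j| = 1) :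
    ∃ A ⊆ s.erase i₀, ∃ B ⊆ s.erase i₀,
      #s * √(#s / 2) ≤ |∑ i ∈ s, ∑ j ∈ s, θ i j * cubeSign A i * cubeSign B j| := by
  obtain ⟨A, hA, B, hB, hbound⟩ := exists_card_mul_sqrt_le_abs_sum_mul_cubeSign s hθ
  obtain ⟨A', hA', σ, hσ, hAA'⟩ := exists_subset_erase_cubeSign_eq_mul hA i₀
  obtain ⟨B', hB', τ, hτ, hBB'⟩ := exists_subset_erase_cubeSign_eq_mul hB i₀
  refine ⟨A', hA', B', hB', ?_⟩
  have hflip : ∑ i ∈ s, ∑ j ∈ s, θ i j * cubeSign A' i * cubeSign B' j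
      = σ * τ * ∑ i ∈ s, ∑ j ∈ s, θ i j * cubeSign A i * cubeSign B j := by
    simp only [mul_sum]
    exact sum_congr rfl fun i hi => sum_congr rfl fun j hj => by rw [hAA' i hi, hBB' j hj]; ring
  rwa [hflip, abs_mul, abs_mul, hσ, hτ, one_mul, one_mul]

end Cube

def dyadicIoo (L v : ℕ) : Set ℝ := Ioo (v / 2 ^ L) ((v + 1) / 2 ^ L)

lemma dyadicIoo_subset_Icc {L v : ℕ} (hv : v < 2 ^ L) : dyadicIoo L v ⊆ Icc 0 1 := by
  refine Ioo_subset_Icc_self.trans (Icc_subset_Icc (by positivity) ?_)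
  rw [div_le_one (by positivity)]
  exact_mod_cast hv

lemma volume_dyadicIoo (L v : ℕ) : volume (dyadicIoo L v) = ENNReal.ofReal (1 / 2 ^ L) := by
  rw [dyadicIoo, Real.volume_Ioo]
  congr 1
  ring

lemma μsq_dyadicIoo_prod_ne_zero {L v w : ℕ} (hv : v < 2 ^ L) (hw : w < 2 ^ L) :
    μsq (dyadicIoo L v ×ˢ dyadicIoo L w) ≠ 0 := by
  rw [μsq, Measure.prod_prod, Measure.restrict_apply' measurableSet_Icc,
    Measure.restrict_apply' measurableSet_Icc, inter_eq_left.2 (dyadicIoo_subset_Icc hv),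
    inter_eq_left.2 (dyadicIoo_subset_Icc hw), volume_dyadicIoo, volume_dyadicIoo]
  simp only [ne_eq, mul_eq_zero, ENNReal.ofReal_eq_zero, or_self, not_le]
  positivity

lemma sign_sin_pi_mul_of_mem_Ioo {x : ℝ} {q : ℕ} (hx : x ∈ Ioo (q : ℝ) (q + 1)) :
    Real.sign (sin (π * x)) = (-1) ^ q := by
  have hpos : 0 < sin (π * (x - q)) :=
    sin_pos_of_pos_of_lt_pi (by nlinarith [hx.1, pi_pos]) (by nlinarith [hx.2, pi_pos])
  rw [show π * x = π * (x - q) + q * π by ring, sin_add_nat_mul_pi]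
  rcases neg_one_pow_eq_or ℝ q with h | h <;> rw [h]
  · rw [one_mul, Real.sign_of_pos hpos]
  · rw [neg_one_mul, Real.sign_of_neg (neg_neg_of_pos hpos)]

lemma mem_Ioo_nat_div_of_mem_Ioo_div {v d : ℕ} (hd : 0 < d) {x : ℝ}
    (hx : x ∈ Ioo ((v : ℝ) / d) ((v + 1) / d)) : x ∈ Ioo ((v / d : ℕ) : ℝ) ((v / d : ℕ) + 1) := by
  refine ⟨Nat.cast_div_le.trans_lt hx.1, hx.2.trans_le ?_⟩
  rw [div_le_iff₀ (by exact_mod_cast hd)]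
  have h := Nat.lt_div_mul_add (a := v) hd
  exact_mod_cast (show v + 1 ≤ (v / d + 1) * d by rw [add_mul, one_mul]; omega)

lemma rad_eq_neg_one_pow_of_mem_dyadicIoo {L v k : ℕ} (hk₁ : 1 ≤ k) (hk : k ≤ L + 1) {t : ℝ}
    (ht : t ∈ dyadicIoo L v) : rad k t = (-1) ^ (v / 2 ^ (L + 1 - k)) := by
  have hL : (2 : ℝ) ^ L = 2 ^ (L + 1 - k) * 2 ^ (k - 1) := by rw [← pow_add]; congr 1; omega
  have hscaled : 2 ^ (k - 1) * t ∈ Ioo ((v : ℝ) / (2 ^ (L + 1 - k) : ℕ))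
      ((v + 1) / (2 ^ (L + 1 - k) : ℕ)) := by
    obtain ⟨h₁, h₂⟩ := ht
    rw [hL, ← div_div, div_lt_iff₀' (by positivity)] at h₁
    rw [hL, ← div_div, lt_div_iff₀' (by positivity)] at h₂
    push_cast
    exact ⟨h₁, h₂⟩
  rw [rad, mul_comm _ π, mul_assoc]
  exact sign_sin_pi_mul_of_mem_Ioo (mem_Ioo_nat_div_of_mem_Ioo_div (by positivity) hscaled)

lemma neg_one_pow_sum_two_pow_div (S : Finset ℕ) (p : ℕ) :
    (-1 : ℝ) ^ ((∑ q ∈ S, 2 ^ q) / 2 ^ p) = cubeSign S p := by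
  have hbit : p ∈ S ↔ (∑ q ∈ S, 2 ^ q) / 2 ^ p % 2 = 1 := by
    conv_lhs => rw [← Finset.toFinset_bitIndices_sum_two_pow S]
    rw [List.mem_toFinset, Nat.mem_bitIndices, Nat.testBit_eq_decide_div_mod_eq, decide_eq_true_iff]
  rw [neg_one_pow_eq_pow_mod_two, cubeSign]
  rcases Nat.mod_two_eq_zero_or_one ((∑ q ∈ S, 2 ^ q) / 2 ^ p) with h | h <;> simp [hbit, h]

-- Digit `n + 1 - i` of the code is set iff `i ∈ C`; it is the digit that `r_i` reads at level `n`.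
def dyadicCode (n : ℕ) (C : Finset ℕ) : ℕ := ∑ p ∈ C.image (n + 1 - ·), 2 ^ p

lemma dyadicCode_lt {n : ℕ} {C : Finset ℕ} (hC : C ⊆ (Finset.Icc 1 n).erase 1) :
    dyadicCode n C < 2 ^ n :=
  Nat.geomSum_lt le_rfl fun p hp => by
    obtain ⟨i, hi, rfl⟩ := mem_image.1 hp
    have := hC hi
    simp only [mem_erase, Finset.mem_Icc] at this
    omega

lemma rad_eq_cubeSign_of_mem_dyadicIoo {n : ℕ} {C : Finset ℕ} (hC : C ⊆ Finset.Icc 1 n) {i : ℕ}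
    (hi : i ∈ Finset.Icc 1 n) {t : ℝ} (ht : t ∈ dyadicIoo n (dyadicCode n C)) :
    rad i t = cubeSign C i := by
  have he : Set.InjOn (n + 1 - ·) (Finset.Icc 1 n) := fun i hi j hj h => by
    simp only [coe_Icc, Set.mem_Icc] at hi hj h; omega
  obtain ⟨hi₁, hin⟩ := Finset.mem_Icc.1 hi
  rw [rad_eq_neg_one_pow_of_mem_dyadicIoo hi₁ (by omega) ht, dyadicCode,
    neg_one_pow_sum_two_pow_div, cubeSign_image he hC hi]

lemma ofReal_le_eLpNorm_top_of_le_norm {α E : Type*} [MeasurableSpace α] [NormedAddCommGroup E]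
    {μ : Measure α} {f : α → E} {S : Set α} (hS : μ S ≠ 0) {C : ℝ} (hC : ∀ x ∈ S, C ≤ ‖f x‖) :
    ENNReal.ofReal C ≤ eLpNorm f ⊤ μ := by
  rw [eLpNorm_exponent_top]
  by_contra! hlt
  have hae : ∀ᵐ x ∂μ, ‖f x‖ₑ < ENNReal.ofReal C :=
    ae_le_eLpNormEssSup.mono fun x hx => hx.trans_lt hlt
  refine hS (measure_mono_null (fun x hx => ?_) (ae_iff.1 hae))
  exact not_lt.2 (ofReal_norm (f x) ▸ ENNReal.ofReal_le_ofReal (hC x hx))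

/-- For every choice of signs `θ_{i,j} = ±1`, the double sign sum satisfies
`‖Σ_{i,j=1}^n θ_{i,j} r_i(s) r_j(t)‖_∞ ≥ (1/√2) n^{3/2}`. -/
theorem sign_chaos_sup_norm_lower_bound (n : ℕ) (θ : ℕ → ℕ → ℝ)
    (hθ : ∀ i j, θ i j = 1 ∨ θ i j = -1) :
    ENNReal.ofReal ((1 / Real.sqrt 2) * (n : ℝ) ^ ((3:ℝ)/2))
      ≤ eLpNorm (fun p : ℝ × ℝ =>
          ∑ i ∈ Finset.Icc 1 n, ∑ j ∈ Finset.Icc 1 n, θ i j * rad i p.1 * rad j p.2) ⊤ μsq := by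
  obtain ⟨A, hA, B, hB, hAB⟩ := exists_subset_erase_card_mul_sqrt_le_abs_sum_mul_cubeSign
    (Finset.Icc 1 n) 1 fun i _ j _ => (abs_eq zero_le_one).2 (hθ i j)
  have hvalue :
      1 / √2 * (n : ℝ) ^ ((3 : ℝ) / 2) = #(Finset.Icc 1 n) * √(#(Finset.Icc 1 n) / 2) := by
    rw [Nat.card_Icc, add_tsub_cancel_right, show (3 : ℝ) / 2 = 1 + 1 / 2 by norm_num,
      rpow_add' n.cast_nonneg (by norm_num), rpow_one, ← sqrt_eq_rpow, sqrt_div' _ zero_le_two]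
    ring
  rw [hvalue]
  refine ofReal_le_eLpNorm_top_of_le_norm
    (μsq_dyadicIoo_prod_ne_zero (dyadicCode_lt hA) (dyadicCode_lt hB)) fun p ⟨hp₁, hp₂⟩ => ?_
  have hconst : ∑ i ∈ Finset.Icc 1 n, ∑ j ∈ Finset.Icc 1 n, θ i j * rad i p.1 * rad j p.2
      = ∑ i ∈ Finset.Icc 1 n, ∑ j ∈ Finset.Icc 1 n, θ i j * cubeSign A i * cubeSign B j :=
    sum_congr rfl fun i hi => sum_congr rfl fun j hj => by
      rw [rad_eq_cubeSign_of_mem_dyadicIoo (hA.trans (erase_subset _ _)) hi hp₁,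
        rad_eq_cubeSign_of_mem_dyadicIoo (hB.trans (erase_subset _ _)) hj hp₂]
  rwa [Real.norm_eq_abs, hconst]
end

section
/- The system {r_i(s) r_j(t)}_{i,j≥1} is not a Sidon system: there is no constant C > 0 such that C^{-1} Σ|a_{i,j}| ≤ ‖Σ a_{i,j} r_i(s) r_j(t)‖_{L^∞([0,1]²)} ≤ C Σ|a_{i,j}| for all finitely supported real coefficient arrays (a_{i,j}). -/
open MeasureTheory Real Set

/-! Take as coefficient array a Hadamard matrix `H` of order `N = 2^k` (Sylvester's
construction). Its `ℓ¹` norm is `N²`. Since `Hᵀ H = N • 1`, Cauchy–Schwarz gives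
`|∑ H i j x i y j| ≤ ‖x‖ ‖H y‖ = √N ‖x‖ ‖y‖ ≤ N^(3/2)` whenever `|x i|, |y j| ≤ 1`, in particular
for `x i = r_i(s)`, `y j = r_j(t)`. So the lower Sidon inequality `C⁻¹ N² ≤ N^(3/2)` fails as soon
as `N > C²`. -/

namespace Matrix

section Hadamard

variable {R : Type*} [CommRing R] [StarRing R] [TrivialStar R]

theorem isHadamard_fin_two : (!![1, 1; 1, -1] : Matrix (Fin 2) (Fin 2) R).IsHadamard := by
  have hT : (!![1, 1; 1, -1] : Matrix (Fin 2) (Fin 2) R)ᴴ = !![1, 1; 1, -1] := by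
    ext i j; fin_cases i <;> fin_cases j <;> simp
  refine ⟨fun i j => ?_, ?_, ?_⟩
  · fin_cases i <;> fin_cases j <;> simp [Unitary.mem_iff]
  all_goals
    rw [hT]; ext i j; fin_cases i <;> fin_cases j <;> simp [mul_apply] <;> ring

theorem isHadamard_one_fin_one : (1 : Matrix (Fin 1) (Fin 1) R).IsHadamard := by
  refine ⟨fun i j => ?_, ?_, ?_⟩
  · rw [Subsingleton.elim i j, one_apply_eq]
    exact one_mem _
  all_goals simp

theorem exists_isHadamard_fin_two_pow (k : ℕ) :
    ∃ H : Matrix (Fin (2 ^ k)) (Fin (2 ^ k)) R, H.IsHadamard := by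
  induction k with
  | zero => exact ⟨1, isHadamard_one_fin_one⟩
  | succ k ih =>
    obtain ⟨H, hH⟩ := ih
    let e : Fin 2 × Fin (2 ^ k) ≃ Fin (2 ^ (k + 1)) :=
      finProdFinEquiv.trans (finCongr (by ring))
    exact ⟨_, (isHadamard_fin_two.kronecker hH).reindex e e⟩

end Hadamard

variable {m n : Type*} [Fintype m] [Fintype n]

section CommSemiring

variable {R : Type*} [CommSemiring R]

theorem dotProduct_mulVec_eq_sum_sum (x : m → R) (A : Matrix m n R) (y : n → R) :
    x ⬝ᵥ A *ᵥ y = ∑ i, ∑ j, A i j * x i * y j := by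
  simp only [dotProduct, mulVec, Finset.mul_sum]
  exact Finset.sum_congr rfl fun i _ => Finset.sum_congr rfl fun j _ => by ring

theorem mulVec_dotProduct_mulVec_self [DecidableEq n] {A : Matrix m n R} {c : R}
    (hA : Aᵀ * A = c • 1) (y : n → R) : A *ᵥ y ⬝ᵥ A *ᵥ y = c * (y ⬝ᵥ y) := by
  rw [dotProduct_mulVec, ← vecMul_transpose, vecMul_vecMul, hA, vecMul_smul, vecMul_one,
    smul_dotProduct, smul_eq_mul]

end CommSemiring

section Ordered

variable {R : Type*} [CommRing R] [LinearOrder R] [IsStrictOrderedRing R]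

theorem sq_dotProduct_le (x y : m → R) : (x ⬝ᵥ y) ^ 2 ≤ (x ⬝ᵥ x) * (y ⬝ᵥ y) := by
  simpa only [dotProduct, sq] using Finset.sum_mul_sq_le_sq_mul_sq Finset.univ x y

theorem dotProduct_self_nonneg (x : m → R) : 0 ≤ x ⬝ᵥ x :=
  Finset.sum_nonneg fun i _ => mul_self_nonneg (x i)

theorem dotProduct_self_le_card {x : m → R} (hx : ∀ i, |x i| ≤ 1) :
    x ⬝ᵥ x ≤ Fintype.card m := by
  calc x ⬝ᵥ x = ∑ i, x i * x i := rfl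
    _ ≤ ∑ _i : m, (1 : R) :=
      Finset.sum_le_sum fun i _ => abs_le_one_iff_mul_self_le_one.mp (hx i)
    _ = Fintype.card m := by simp

theorem IsHadamard.abs_apply_eq_one [StarRing R] [TrivialStar R] [DecidableEq n]
    {A : Matrix n n R} (hA : A.IsHadamard) (i j : n) : |A i j| = 1 := by
  rcases Unitary.mem_iff_eq_one_or_eq_neg_one.mp (hA.apply_mem i j) with h | h <;> simp [h]

end Ordered

theorem abs_dotProduct_mulVec_le [DecidableEq n] {A : Matrix m n ℝ} {c : ℝ} (hc : 0 ≤ c)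
    (hA : Aᵀ * A = c • 1) {x : m → ℝ} {y : n → ℝ} (hx : ∀ i, |x i| ≤ 1)
    (hy : ∀ j, |y j| ≤ 1) :
    |x ⬝ᵥ A *ᵥ y| ≤ √(Fintype.card m * (c * Fintype.card n)) := by
  refine abs_le_sqrt ((sq_dotProduct_le x (A *ᵥ y)).trans ?_)
  rw [mulVec_dotProduct_mulVec_self hA]
  have := dotProduct_self_nonneg y
  gcongr
  · exact dotProduct_self_le_card hx
  · exact dotProduct_self_le_card hy

theorem IsHadamard.abs_dotProduct_mulVec_le [DecidableEq n] {A : Matrix n n ℝ}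
    (hA : A.IsHadamard) {x y : n → ℝ} (hx : ∀ i, |x i| ≤ 1) (hy : ∀ j, |y j| ≤ 1) :
    |x ⬝ᵥ A *ᵥ y| ≤ √(Fintype.card n ^ 3) := by
  have hA' : Aᵀ * A = (Fintype.card n : ℝ) • 1 := by
    simpa [conjTranspose_eq_transpose_of_trivial] using hA.conjTranspose_mul
  simpa [pow_succ, mul_assoc] using Matrix.abs_dotProduct_mulVec_le (by positivity) hA' hx hy

end Matrix

theorem MeasureTheory.eLpNorm_top_le_ofReal_of_forall_norm_le {α E : Type*}
    [MeasurableSpace α] {μ : Measure α} [NormedAddCommGroup E] {f : α → E} {B : ℝ}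
    (hf : ∀ x, ‖f x‖ ≤ B) : eLpNorm f ⊤ μ ≤ ENNReal.ofReal B := by
  rw [eLpNorm_exponent_top]
  exact eLpNormEssSup_le_of_ae_bound (ae_of_all _ hf)

theorem Finset.sum_Icc_one_eq_sum_fin {M : Type*} [AddCommMonoid M] (N : ℕ) (f : ℕ → M) :
    ∑ i ∈ Icc 1 N, f i = ∑ i : Fin N, f (i + 1) := by
  have h := sum_Ico_add' f 0 N 1
  rw [zero_add] at h
  rw [← Ico_add_one_right_eq_Icc, ← h, ← range_eq_Ico,
    Fin.sum_univ_eq_sum_range (fun i => f (i + 1))]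

theorem abs_rad_le_one (k : ℕ) (t : ℝ) : |rad k t| ≤ 1 := by
  rcases Real.sign_apply_eq (Real.sin (2 ^ (k - 1) * π * t)) with h | h | h <;>
    simp [rad, h]

/-- The system `{r_i(s) r_j(t)}` is not a Sidon system: no constant `C > 0` makes the
sup-norm of every finite polynomial two-sidedly comparable to the `ℓ¹` norm of its
coefficients. -/
theorem double_rademacher_not_sidon :
    ¬ ∃ C : ℝ, 0 < C ∧ ∀ (N : ℕ) (a : ℕ → ℕ → ℝ),
      ENNReal.ofReal (C⁻¹ * ∑ i ∈ Finset.Icc 1 N, ∑ j ∈ Finset.Icc 1 N, |a i j|)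
          ≤ eLpNorm (fun p : ℝ × ℝ =>
              ∑ i ∈ Finset.Icc 1 N, ∑ j ∈ Finset.Icc 1 N,
                a i j * rad i p.1 * rad j p.2) ⊤ μsq ∧
      eLpNorm (fun p : ℝ × ℝ =>
          ∑ i ∈ Finset.Icc 1 N, ∑ j ∈ Finset.Icc 1 N,
            a i j * rad i p.1 * rad j p.2) ⊤ μsq
        ≤ ENNReal.ofReal (C * ∑ i ∈ Finset.Icc 1 N, ∑ j ∈ Finset.Icc 1 N, |a i j|) := by
  rintro ⟨C, hC, hSidon⟩
  obtain ⟨k, hk⟩ := pow_unbounded_of_one_lt (C ^ 2) one_lt_two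
  set N := 2 ^ k
  obtain ⟨H, hH⟩ : ∃ H : Matrix (Fin N) (Fin N) ℝ, H.IsHadamard :=
    Matrix.exists_isHadamard_fin_two_pow k
  have : NeZero N := ⟨by positivity⟩
  let a : ℕ → ℕ → ℝ := fun i j => H (Fin.ofNat N (i - 1)) (Fin.ofNat N (j - 1))
  have ha (i j : Fin N) : a (i + 1) (j + 1) = H i j := by simp [a]
  have hl1 : ∑ i ∈ Finset.Icc 1 N, ∑ j ∈ Finset.Icc 1 N, |a i j| = N ^ 2 := by
    simp [Finset.sum_Icc_one_eq_sum_fin, ha, hH.abs_apply_eq_one, sq]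
  have hsup (p : ℝ × ℝ) :
      ‖∑ i ∈ Finset.Icc 1 N, ∑ j ∈ Finset.Icc 1 N, a i j * rad i p.1 * rad j p.2‖
        ≤ √(N ^ 3) := by
    have := hH.abs_dotProduct_mulVec_le (x := fun i => rad (i + 1) p.1)
      (y := fun j => rad (j + 1) p.2) (fun _ => abs_rad_le_one _ _) (fun _ => abs_rad_le_one _ _)
    simpa [Finset.sum_Icc_one_eq_sum_fin, ha, Matrix.dotProduct_mulVec_eq_sum_sum] using this
  have hlower := (hSidon N a).1.trans (eLpNorm_top_le_ofReal_of_forall_norm_le hsup)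
  rw [hl1, ENNReal.ofReal_le_ofReal_iff (by positivity),
    Real.le_sqrt (by positivity) (by positivity)] at hlower
  have hN : (N : ℝ) ≤ C ^ 2 := by
    have : (0 : ℝ) < N := by positivity
    field_simp at hlower
    nlinarith
  exact hk.not_ge (by simpa [N] using hN)
end
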